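/- Every x ∈ 𝒳 admits the pathwise quadratic variation ⟨x⟩_t = t along the dyadic partitions: for every t ∈ [0,1], Σ_{s∈𝕋_n, s≤t} (x(s') − x(s))² → t as n → ∞, where s' denotes the successor of s in 𝕋_n. -/

import Mathlib

noncomputable def e00 (t : ℝ) : ℝ := max (min t (1 - t)) 0

noncomputable def e (m : ℕ) (k : ℤ) (t : ℝ) : ℝ :=
  (2 : ℝ) ^ (-(m : ℝ) / 2) * e00 ((2 : ℝ) ^ m * t - k)

def mathcalX : Set (ℝ → ℝ) :=
  {x | ∃ θ : ℕ → ℕ → ℝ, (∀ m k, θ m k = 1 ∨ θ m k = -1) ∧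
    ∀ t, x t = ∑' m : ℕ, ∑ k ∈ Finset.range (2 ^ m), θ m k * e m k t}

/-- Discrete quadratic variation of `x` up to time `t` along the `n`-th dyadic
partition.  (The point `s = 1` of the partition has successor `1` and hence
contributes `0`, so it is omitted.) -/
noncomputable def qv (x : ℝ → ℝ) (n : ℕ) (t : ℝ) : ℝ :=
  ∑ j ∈ Finset.range (2 ^ n),
    if (j : ℝ) * 2 ^ (-(n : ℤ)) ≤ t then
      (x ((j + 1 : ℝ) * 2 ^ (-(n : ℤ))) - x ((j : ℝ) * 2 ^ (-(n : ℤ)))) ^ 2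
    else 0

/-!
At the points of the `n`-th dyadic partition every tent of level `m ≥ n` vanishes, and every tent
of level `m < n` is affine on each interval of the partition, with slope `± 2 ^ (m / 2)`. So the
increment over the `j`-th interval is `2 ^ (-n) * ∑ m < n, √2 ^ m * ε m j` with signs
`ε m j = ± 1`. After squaring, the diagonal terms give `dyadicCount n t * (2 ^ n - 1) / 4 ^ n`,
which is within `2 ^ (-n)` of `t`. For `m < m'` the product `ε m j * ε m' j` sums to zero over
every block of `2 ^ (n - m')` consecutive intervals, so each cross term is at most `2 ^ (-n)`, and
`|qv x n t - t| ≤ (n ^ 2 + 1) / 2 ^ n`.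
-/

open Finset

lemma e00_eq_zero_of_nonpos {t : ℝ} (h : t ≤ 0) : e00 t = 0 :=
  max_eq_right ((min_le_left _ _).trans h)

lemma e00_eq_zero_of_one_le {t : ℝ} (h : 1 ≤ t) : e00 t = 0 :=
  max_eq_right ((min_le_right _ _).trans (by linarith))

lemma e00_of_le_half {t : ℝ} (h₀ : 0 ≤ t) (h : t ≤ 1 / 2) : e00 t = t := by
  rw [e00, min_eq_left (by linarith), max_eq_left h₀]

lemma e00_of_half_le {t : ℝ} (h : 1 / 2 ≤ t) (h₁ : t ≤ 1) : e00 t = 1 - t := by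
  rw [e00, min_eq_right (by linarith), max_eq_left (by linarith)]

lemma e00_intCast (z : ℤ) : e00 z = 0 := by
  rcases le_or_gt z 0 with h | h
  · exact e00_eq_zero_of_nonpos (by exact_mod_cast h)
  · exact e00_eq_zero_of_one_le (by exact_mod_cast h)

lemma e00_div_sub_eq_zero {D y : ℝ} (hD : 0 < D) (hy : y + 1 ≤ 0 ∨ D ≤ y) :
    e00 ((y + 1) / D) - e00 (y / D) = 0 := by
  rcases hy with hy | hy
  · rw [e00_eq_zero_of_nonpos (div_nonpos_of_nonpos_of_nonneg hy hD.le),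
      e00_eq_zero_of_nonpos (div_nonpos_of_nonpos_of_nonneg (by linarith) hD.le), sub_zero]
  · rw [e00_eq_zero_of_one_le ((one_le_div hD).2 (by linarith)),
      e00_eq_zero_of_one_le ((one_le_div hD).2 hy), sub_zero]

lemma e00_div_sub_of_lt {H r : ℕ} (hr : r < 2 * H) :
    e00 ((r + 1) / (2 * H)) - e00 (r / (2 * H)) = (-1) ^ (r / H) / (2 * H) := by
  have hH : (0 : ℝ) < H := by exact_mod_cast (show 0 < H by omega)
  have hr' : (r : ℝ) + 1 ≤ 2 * H := by exact_mod_cast hr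
  have h2H : (0 : ℝ) < 2 * H := by positivity
  rcases lt_or_ge r H with hrH | hrH
  · have : (r : ℝ) + 1 ≤ H := by exact_mod_cast hrH
    have hle : ∀ y : ℝ, 0 ≤ y → y ≤ r + 1 → e00 (y / (2 * H)) = y / (2 * H) := fun y hy₀ hy =>
      e00_of_le_half (by positivity) (by rw [div_le_iff₀ h2H]; linarith)
    rw [Nat.div_eq_of_lt hrH, hle _ (by positivity) le_rfl, hle _ (by positivity) (by linarith)]
    field_simp
    ring
  · have : (H : ℝ) ≤ r := by exact_mod_cast hrH
    have hge : ∀ y : ℝ, r ≤ y → y ≤ r + 1 → e00 (y / (2 * H)) = 1 - y / (2 * H) := fun y hy₀ hy =>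
      e00_of_half_le (by rw [le_div_iff₀ h2H]; linarith) (by rw [div_le_one h2H]; linarith)
    rw [show r / H = 1 from Nat.div_eq_of_lt_le (by omega) (by omega), hge _ (by linarith) le_rfl,
      hge _ le_rfl (by linarith)]
    field_simp
    ring

lemma e_natCast_div_two_pow {m n : ℕ} (h : n ≤ m) (k : ℤ) (j : ℕ) : e m k (j / 2 ^ n) = 0 := by
  have : (2 : ℝ) ^ m * (j / 2 ^ n) - k = ((j * 2 ^ (m - n) : ℕ) - k : ℤ) := by
    rw [← Nat.sub_add_cancel h, pow_add]
    push_cast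
    field_simp
    simp [mul_comm]
  rw [e, this, e00_intCast, mul_zero]

lemma two_rpow_neg_div_two (m : ℕ) : (2 : ℝ) ^ (-(m : ℝ) / 2) = (√2 ^ m)⁻¹ := by
  rw [Real.sqrt_eq_rpow, ← Real.rpow_natCast, ← Real.rpow_mul zero_le_two,
    ← Real.rpow_neg zero_le_two]
  ring_nf

lemma sqrt_two_pow_mul_self (m : ℕ) : √2 ^ m * √2 ^ m = 2 ^ m := by
  rw [← mul_pow, Real.mul_self_sqrt zero_le_two]

/-- The sign of the slope of `∑ k, θ m k * e m k` on `[j / 2 ^ n, (j + 1) / 2 ^ n]` for `m < n`: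
this interval lies in the left or the right half of the support of the tent `e m (j / 2 ^ (n - m))`.
-/
def slopeSign (θ : ℕ → ℕ → ℝ) (n m j : ℕ) : ℝ :=
  θ m (j / 2 ^ (n - m)) * (-1) ^ (j / 2 ^ (n - m - 1))

lemma sum_mul_e_sub {θ : ℕ → ℕ → ℝ} {m n j : ℕ} (hmn : m < n) (hj : j < 2 ^ n) :
    ∑ k ∈ range (2 ^ m), θ m k * (e m k ((j + 1) / 2 ^ n) - e m k (j / 2 ^ n)) =
      √2 ^ m * slopeSign θ n m j / 2 ^ n := by
  obtain ⟨H, hH, hD, hH'⟩ : ∃ H, 0 < H ∧ 2 ^ (n - m) = 2 * H ∧ 2 ^ (n - m - 1) = H :=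
    ⟨_, by positivity, by rw [← pow_succ']; congr 1; omega, rfl⟩
  have hnm : 2 ^ n = 2 ^ m * (2 * H) := by rw [← hD, ← pow_add]; congr 1; omega
  obtain ⟨q, r, hr, rfl⟩ : ∃ q r, r < 2 * H ∧ j = 2 * H * q + r :=
    ⟨j / (2 * H), j % (2 * H), Nat.mod_lt _ (by omega), (Nat.div_add_mod j _).symm⟩
  have hq : q < 2 ^ m := by
    rw [hnm] at hj; nlinarith
  have hnmR : (2 : ℝ) ^ n = 2 ^ m * (2 * H) := by exact_mod_cast hnm
  have hHR : (0 : ℝ) < 2 * H := by positivity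
  have hsub : ∀ k : ℕ,
      e m k ((↑(2 * H * q + r) + 1) / 2 ^ n) - e m k (↑(2 * H * q + r) / 2 ^ n) =
        (√2 ^ m)⁻¹ * (e00 (((2 * H * q + r : ℕ) - k * (2 * H) + 1) / (2 * H)) -
          e00 (((2 * H * q + r : ℕ) - k * (2 * H)) / (2 * H))) := by
    intro k
    simp only [e, two_rpow_neg_div_two, hnmR, ← mul_sub]
    congr 3 <;> (field_simp; push_cast; ring)
  simp only [hsub]
  rw [sum_eq_single_of_mem q (mem_range.2 hq)]
  · have hjq : ((2 * H * q + r : ℕ) : ℝ) - q * (2 * H) = r := by push_cast; ring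
    have hdivD : (2 * H * q + r) / (2 * H) = q := by
      rw [Nat.mul_add_div (by omega), Nat.div_eq_of_lt hr, add_zero]
    have hdivH : (2 * H * q + r) / H = 2 * q + r / H := by
      rw [mul_comm 2 H, mul_assoc, Nat.mul_add_div hH]
    rw [hjq, e00_div_sub_of_lt hr, slopeSign, hD, hH', hdivD, hdivH, pow_add, pow_mul, neg_one_sq,
      one_pow, one_mul, hnmR, ← sqrt_two_pow_mul_self m]
    field_simp
  · intro k _ hkq
    rw [e00_div_sub_eq_zero hHR, mul_zero, mul_zero]
    rcases lt_or_gt_of_ne hkq with hk | hk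
    · right
      have : (k + 1) * (2 * H) ≤ 2 * H * q + r := by nlinarith
      have : ((k : ℝ) + 1) * (2 * H) ≤ ((2 * H * q + r : ℕ) : ℝ) := by exact_mod_cast this
      linarith
    · left
      have : 2 * H * q + r + 1 ≤ k * (2 * H) := by nlinarith
      have : ((2 * H * q + r : ℕ) : ℝ) + 1 ≤ k * (2 * H) := by exact_mod_cast this
      linarith

section Series

variable {θ : ℕ → ℕ → ℝ} {x : ℝ → ℝ}

lemma eq_sum_range_of_natCast_div_two_pow
    (hx : ∀ t, x t = ∑' m : ℕ, ∑ k ∈ range (2 ^ m), θ m k * e m k t) (n j : ℕ) :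
    x (j / 2 ^ n) = ∑ m ∈ range n, ∑ k ∈ range (2 ^ m), θ m k * e m k (j / 2 ^ n) := by
  rw [hx]
  refine tsum_eq_sum fun m hm => sum_eq_zero fun k _ => ?_
  rw [e_natCast_div_two_pow (not_lt.1 (mt mem_range.2 hm)), mul_zero]

lemma sub_eq_sum_slopeSign
    (hx : ∀ t, x t = ∑' m : ℕ, ∑ k ∈ range (2 ^ m), θ m k * e m k t) {n j : ℕ} (hj : j < 2 ^ n) :
    x ((j + 1) / 2 ^ n) - x (j / 2 ^ n) =
      (∑ m ∈ range n, √2 ^ m * slopeSign θ n m j) / 2 ^ n := by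
  have hj1 := eq_sum_range_of_natCast_div_two_pow hx n (j + 1)
  push_cast at hj1
  rw [hj1, eq_sum_range_of_natCast_div_two_pow hx, sum_div, ← sum_sub_distrib]
  refine sum_congr rfl fun m hm => ?_
  rw [← sum_mul_e_sub (mem_range.1 hm) hj, ← sum_sub_distrib]
  simp only [mul_sub]

end Series

lemma sum_range_two_mul_neg_one_pow_div (H : ℕ) :
    ∑ i ∈ range (2 * H), (-1 : ℝ) ^ (i / H) = 0 := by
  rcases Nat.eq_zero_or_pos H with rfl | hH
  · simp
  have hlow : ∀ i ∈ range H, (-1 : ℝ) ^ (i / H) = 1 := fun i hi => by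
    rw [Nat.div_eq_of_lt (mem_range.1 hi), pow_zero]
  have hhigh : ∀ i ∈ range H, (-1 : ℝ) ^ ((H + i) / H) = -1 := fun i hi => by
    rw [Nat.add_div_left _ hH, Nat.div_eq_of_lt (mem_range.1 hi), zero_add, pow_one]
  rw [two_mul, sum_range_add, sum_congr rfl hlow, sum_congr rfl hhigh]
  simp

lemma abs_sum_range_le_of_sum_block_eq_zero {f : ℕ → ℝ} {L : ℕ} {B : ℝ} (hL : 0 < L)
    (hf : ∀ j, |f j| ≤ B) (hblock : ∀ a, ∑ i ∈ range L, f (L * a + i) = 0) (J : ℕ) :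
    |∑ j ∈ range J, f j| ≤ L * B := by
  have hfull : ∀ a, ∑ j ∈ range (L * a), f j = 0 := by
    intro a
    induction a with
    | zero => simp
    | succ a ih => rw [mul_add_one, sum_range_add, ih, hblock, add_zero]
  rw [← Nat.div_add_mod J L, sum_range_add, hfull, zero_add]
  calc |∑ i ∈ range (J % L), f (L * (J / L) + i)|
      ≤ ∑ i ∈ range (J % L), B := (abs_sum_le_sum_abs _ _).trans (sum_le_sum fun i _ => hf _)
    _ ≤ L * B := by
      rw [sum_const, card_range, nsmul_eq_mul]
      gcongr
      · exact (abs_nonneg _).trans (hf 0)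
      · exact (Nat.mod_lt _ hL).le

lemma abs_sum_range_mul_neg_one_pow_div_le {g : ℕ → ℝ} (hg : ∀ a, |g a| ≤ 1) {H : ℕ}
    (hH : 0 < H) (J : ℕ) : |∑ j ∈ range J, g (j / (2 * H)) * (-1) ^ (j / H)| ≤ 2 * H := by
  have hterm : ∀ a, ∀ i ∈ range (2 * H),
      g ((2 * H * a + i) / (2 * H)) * (-1 : ℝ) ^ ((2 * H * a + i) / H) = g a * (-1) ^ (i / H) := by
    intro a i hi
    rw [Nat.mul_add_div (by omega), Nat.div_eq_of_lt (mem_range.1 hi), add_zero, mul_comm 2 H,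
      mul_assoc, Nat.mul_add_div hH, pow_add, pow_mul, neg_one_sq, one_pow, one_mul]
  simpa using abs_sum_range_le_of_sum_block_eq_zero
    (f := fun j => g (j / (2 * H)) * (-1) ^ (j / H)) (L := 2 * H) (B := 1) (by omega)
    (fun j => by simpa [abs_mul] using hg _)
    (fun a => by
      rw [sum_congr rfl (hterm a), ← mul_sum, sum_range_two_mul_neg_one_pow_div, mul_zero]) J

lemma slopeSign_sq {θ : ℕ → ℕ → ℝ} (hθ : ∀ m k, θ m k = 1 ∨ θ m k = -1) (n m j : ℕ) :
    slopeSign θ n m j ^ 2 = 1 := by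
  rcases hθ m (j / 2 ^ (n - m)) with h | h <;> simp [slopeSign, h, ← pow_mul]

lemma abs_sum_slopeSign_mul_le {θ : ℕ → ℕ → ℝ} (hθ : ∀ m k, θ m k = 1 ∨ θ m k = -1)
    {n m m' : ℕ} (hmm' : m < m') (hm'n : m' < n) (J : ℕ) :
    |∑ j ∈ range J, slopeSign θ n m j * slopeSign θ n m' j| ≤ 2 ^ (n - m') := by
  obtain ⟨H, hH, hD, hH'⟩ : ∃ H, 0 < H ∧ 2 ^ (n - m') = 2 * H ∧ 2 ^ (n - m' - 1) = H :=
    ⟨_, by positivity, by rw [← pow_succ']; congr 1; omega, rfl⟩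
  have hdiv : ∀ j l, j / 2 ^ (n - m' + l) = j / (2 * H) / 2 ^ l := fun j l => by
    rw [Nat.div_div_eq_div_mul, pow_add, hD]
  set g : ℕ → ℝ := fun a => θ m (a / 2 ^ (m' - m)) * (-1) ^ (a / 2 ^ (m' - m - 1)) * θ m' a
  have hg : ∀ a, |g a| ≤ 1 := fun a => by
    rcases hθ m (a / 2 ^ (m' - m)) with h | h <;> rcases hθ m' a with h' | h' <;>
      simp [g, h, h']
  have hterm : ∀ j,
      slopeSign θ n m j * slopeSign θ n m' j = g (j / (2 * H)) * (-1) ^ (j / H) := by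
    intro j
    rw [slopeSign, slopeSign, hD, hH', show n - m = n - m' + (m' - m) by omega,
      show n - m' + (m' - m) - 1 = n - m' + (m' - m - 1) by omega, hdiv, hdiv]
    ring
  simp only [hterm]
  calc _ ≤ 2 * (H : ℝ) := abs_sum_range_mul_neg_one_pow_div_le hg hH J
    _ = 2 ^ (n - m') := by exact_mod_cast hD.symm

lemma abs_sqrt_two_pow_mul_sum_slopeSign_mul_le {θ : ℕ → ℕ → ℝ}
    (hθ : ∀ m k, θ m k = 1 ∨ θ m k = -1) {n m m' : ℕ} (hne : m ≠ m') (hm : m < n) (hm' : m' < n)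
    (J : ℕ) :
    |√2 ^ m * √2 ^ m' * ∑ j ∈ range J, slopeSign θ n m j * slopeSign θ n m' j| ≤ 2 ^ n := by
  wlog hlt : m < m' generalizing m m'
  · simpa only [mul_comm] using this hne.symm hm' hm (by omega)
  have hsqrt : √2 ^ m * √2 ^ m' ≤ 2 ^ m' := by
    rw [← sqrt_two_pow_mul_self m']
    gcongr
    exact Real.one_le_sqrt.2 one_le_two
  calc _ = √2 ^ m * √2 ^ m' * |∑ j ∈ range J, slopeSign θ n m j * slopeSign θ n m' j| := by
        rw [abs_mul, abs_of_nonneg (by positivity)]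
    _ ≤ 2 ^ m' * 2 ^ (n - m') := by
        gcongr
        exact abs_sum_slopeSign_mul_le hθ hlt hm' J
    _ = 2 ^ n := by rw [← pow_add, Nat.add_sub_cancel' hm'.le]

lemma sum_sq_sum_mul_eq {ι κ : Type*} [DecidableEq ι] (s : Finset ι) (T : Finset κ) (a : ι → ℝ)
    (ε : ι → κ → ℝ) (hε : ∀ i j, ε i j ^ 2 = 1) :
    ∑ j ∈ T, (∑ i ∈ s, a i * ε i j) ^ 2 = T.card * ∑ i ∈ s, a i ^ 2 +
      ∑ i ∈ s, ∑ i' ∈ s.erase i, a i * a i' * ∑ j ∈ T, ε i j * ε i' j := by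
  calc ∑ j ∈ T, (∑ i ∈ s, a i * ε i j) ^ 2
      = ∑ i ∈ s, ∑ i' ∈ s, a i * a i' * ∑ j ∈ T, ε i j * ε i' j := by
        simp only [sq, sum_mul_sum]
        simp only [mul_sum]
        rw [sum_comm]
        refine sum_congr rfl fun i _ => ?_
        rw [sum_comm]
        exact sum_congr rfl fun i' _ => sum_congr rfl fun j _ => by ring
    _ = ∑ i ∈ s, (T.card * a i ^ 2 + ∑ i' ∈ s.erase i, a i * a i' * ∑ j ∈ T, ε i j * ε i' j) :=
        sum_congr rfl fun i hi => by
          rw [← add_sum_erase _ _ hi]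
          simp [← sq, hε, mul_comm]
    _ = _ := by rw [sum_add_distrib, mul_sum]

/-- The number of `j < 2 ^ n` with `j / 2 ^ n ≤ t`, when `0 ≤ t`. -/
noncomputable def dyadicCount (n : ℕ) (t : ℝ) : ℕ := min (2 ^ n) (⌊2 ^ n * t⌋₊ + 1)

lemma qv_eq_sum_range_dyadicCount (x : ℝ → ℝ) (n : ℕ) {t : ℝ} (ht : 0 ≤ t) :
    qv x n t = ∑ j ∈ range (dyadicCount n t), (x ((j + 1) / 2 ^ n) - x (j / 2 ^ n)) ^ 2 := by
  have hfilter : (range (2 ^ n)).filter (fun j : ℕ => (j : ℝ) / 2 ^ n ≤ t) =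
      range (dyadicCount n t) := by
    ext j
    simp only [mem_filter, mem_range, dyadicCount, lt_min_iff, Nat.lt_add_one_iff,
      div_le_iff₀ (by positivity : (0 : ℝ) < 2 ^ n),
      Nat.le_floor_iff (by positivity : (0 : ℝ) ≤ 2 ^ n * t), mul_comm t]
  simp only [qv, zpow_neg, zpow_natCast, ← div_eq_mul_inv]
  rw [← sum_filter, hfilter]

lemma abs_dyadicCount_mul_sub_le {t : ℝ} (ht : t ∈ Set.Icc (0 : ℝ) 1) (n : ℕ) :
    |(dyadicCount n t : ℝ) * (2 ^ n - 1) - t * 4 ^ n| ≤ 2 ^ n := by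
  obtain ⟨h0, h1⟩ := ht
  have hpos : (0 : ℝ) < 2 ^ n := by positivity
  have hlow : 2 ^ n * t ≤ dyadicCount n t := by
    rw [dyadicCount, Nat.cast_min, le_min_iff]
    push_cast
    exact ⟨by nlinarith, (Nat.lt_floor_add_one _).le⟩
  have hup : (dyadicCount n t : ℝ) ≤ 2 ^ n * t + 1 := by
    refine (Nat.cast_le.2 (min_le_right _ _)).trans ?_
    push_cast
    linarith [Nat.floor_le (by positivity : 0 ≤ (2 : ℝ) ^ n * t)]
  have hle : (dyadicCount n t : ℝ) ≤ 2 ^ n := by exact_mod_cast min_le_left _ _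
  rw [show (4 : ℝ) ^ n = 2 ^ n * 2 ^ n by rw [← mul_pow]; norm_num, abs_le]
  constructor <;> nlinarith

lemma abs_sum_cross_le {θ : ℕ → ℕ → ℝ} (hθ : ∀ m k, θ m k = 1 ∨ θ m k = -1) (n J : ℕ) :
    |∑ m ∈ range n, ∑ m' ∈ (range n).erase m,
        √2 ^ m * √2 ^ m' * ∑ j ∈ range J, slopeSign θ n m j * slopeSign θ n m' j| ≤
      n ^ 2 * 2 ^ n := by
  calc _ ≤ ∑ m ∈ range n, ∑ m' ∈ (range n).erase m,
        |√2 ^ m * √2 ^ m' * ∑ j ∈ range J, slopeSign θ n m j * slopeSign θ n m' j| :=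
        (abs_sum_le_sum_abs _ _).trans (sum_le_sum fun m _ => abs_sum_le_sum_abs _ _)
    _ ≤ ∑ m ∈ range n, ∑ m' ∈ (range n).erase m, (2 : ℝ) ^ n :=
        sum_le_sum fun m hm => sum_le_sum fun m' hm' =>
          abs_sqrt_two_pow_mul_sum_slopeSign_mul_le hθ (ne_of_mem_erase hm').symm (mem_range.1 hm)
            (mem_range.1 (mem_of_mem_erase hm')) J
    _ ≤ ∑ m ∈ range n, ∑ m' ∈ range n, (2 : ℝ) ^ n :=
        sum_le_sum fun m _ =>
          sum_le_sum_of_subset_of_nonneg (erase_subset _ _) fun _ _ _ => by positivity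
    _ = n ^ 2 * 2 ^ n := by simp; ring

lemma abs_qv_sub_le {x : ℝ → ℝ} (hx : x ∈ mathcalX) {t : ℝ} (ht : t ∈ Set.Icc (0 : ℝ) 1)
    (n : ℕ) :
    |qv x n t - t| ≤ (n ^ 2 + 1) / 2 ^ n := by
  obtain ⟨θ, hθ, hxθ⟩ := hx
  set J := dyadicCount n t
  set R := ∑ m ∈ range n, ∑ m' ∈ (range n).erase m,
    √2 ^ m * √2 ^ m' * ∑ j ∈ range J, slopeSign θ n m j * slopeSign θ n m' j
  have hsq : ∑ m ∈ range n, (√2 ^ m) ^ 2 = 2 ^ n - 1 := by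
    simp only [sq, sqrt_two_pow_mul_self, geom_sum_eq (by norm_num : (2 : ℝ) ≠ 1)]
    norm_num
  have hqv : qv x n t = (J * (2 ^ n - 1) + R) / (2 ^ n * 2 ^ n) := by
    rw [qv_eq_sum_range_dyadicCount x n ht.1, sum_congr rfl fun j hj => by
      rw [sub_eq_sum_slopeSign hxθ ((mem_range.1 hj).trans_le (min_le_left _ _))]]
    simp only [div_pow]
    rw [← sum_div, sum_sq_sum_mul_eq _ _ _ _ (slopeSign_sq hθ n), card_range, hsq, sq]
  have h4 : (4 : ℝ) ^ n = 2 ^ n * 2 ^ n := by rw [← mul_pow]; norm_num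
  have hsub : qv x n t - t = ((J * (2 ^ n - 1) - t * 4 ^ n) + R) / (2 ^ n * 2 ^ n) := by
    rw [hqv, h4]
    field_simp
    ring
  calc |qv x n t - t| = |(J * (2 ^ n - 1) - t * 4 ^ n) + R| / (2 ^ n * 2 ^ n) := by
        rw [hsub, abs_div, abs_of_pos (by positivity : (0 : ℝ) < 2 ^ n * 2 ^ n)]
    _ ≤ (2 ^ n + n ^ 2 * 2 ^ n) / (2 ^ n * 2 ^ n) := by
        gcongr
        exact (abs_add_le _ _).trans
          (add_le_add (abs_dyadicCount_mul_sub_le ht n) (abs_sum_cross_le hθ n J))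
    _ = (n ^ 2 + 1) / 2 ^ n := by field_simp; ring

theorem stmt_17 (x : ℝ → ℝ) (hx : x ∈ mathcalX) (t : ℝ) (ht : t ∈ Set.Icc (0 : ℝ) 1) :
    Filter.Tendsto (fun n => qv x n t) Filter.atTop (nhds t) := by
  have hbound : Filter.Tendsto (fun n : ℕ => ((n : ℝ) ^ 2 + 1) / 2 ^ n) Filter.atTop (nhds 0) := by
    simpa [add_div] using (tendsto_pow_const_div_const_pow_of_one_lt 2 one_lt_two).add
      (tendsto_pow_const_div_const_pow_of_one_lt 0 one_lt_two)
  rw [tendsto_iff_norm_sub_tendsto_zero]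
  exact squeeze_zero (fun _ => norm_nonneg _) (abs_qv_sub_le hx ht) hbound
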